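/- Let q > 0 be a real number, and for x > 0 and t > 1 let R_q(x,t) = (t−1)coth((t−1)x) − (q+1)tanh(x) + (q−t)tanh(tx). Define 𝒜_q = {t > 1 : for every x > 0, the partial derivative ∂R_q/∂t(x,t) is negative}. Then 𝒜_q = [1 + (3/4)(q−2), +∞) if q > 2, and 𝒜_q = (1, +∞) if 0 < q ≤ 2. -/

import Mathlib

/-- The function `R_q(x,t)` defined for `x > 0`, `t > 1`. -/
noncomputable def Rq (q x t : ℝ) : ℝ :=
  (t - 1) * (Real.cosh ((t - 1) * x) / Real.sinh ((t - 1) * x)) -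
    (q + 1) * Real.tanh x + (q - t) * Real.tanh (t * x)

open Real Set Filter Topology

/-!
With `u = (t-1)x` and `v = tx`, the partial derivative is
`∂R_q/∂t = (sinh u cosh u - u) / sinh² u - tanh v + (q-t)x / cosh² v`.

As `x → 0⁺` it equals `x (q - (4t+2)/3) + O(x³)`, so it can only stay negative if
`3q ≤ 4t + 2`. Conversely, when `3q ≤ 4t + 2` we have `(q-t)x ≤ v - 2u/3`, and the derivative is
at most `(sinh u cosh u - u) / sinh² u - φ(v)` with `φ(w) = tanh w - (w - 2u/3) / cosh² w`.
Since `φ` increases on `[2u/3, ∞)` and `v > u`, this is below its value at `v = u`, which is negative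
because `sinh u cosh u - u < (2u/3) sinh² u`.
-/

lemma strictMonoOn_Ici_of_hasDerivAt_pos {f f' : ℝ → ℝ} {a : ℝ}
    (hf : ∀ y, HasDerivAt f (f' y) y) (hf' : ∀ y, a < y → 0 < f' y) :
    StrictMonoOn f (Ici a) := by
  refine strictMonoOn_of_hasDerivWithinAt_pos (convex_Ici a)
    (fun y _ => (hf y).continuousAt.continuousWithinAt) (fun y _ => (hf y).hasDerivWithinAt) ?_
  simpa only [interior_Ici, mem_Ioi] using hf'

lemma pos_of_hasDerivAt_pos {f f' : ℝ → ℝ} (hf : ∀ y, HasDerivAt f (f' y) y) (h0 : f 0 = 0)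
    (hf' : ∀ y, 0 < y → 0 < f' y) {a : ℝ} (ha : 0 < a) : 0 < f a :=
  h0 ▸ strictMonoOn_Ici_of_hasDerivAt_pos hf hf' self_mem_Ici ha.le ha

namespace Real

lemma sinh_lt_mul_cosh {a : ℝ} (ha : 0 < a) : sinh a < a * cosh a := by
  have hd y : HasDerivAt (fun y => y * cosh y - sinh y) (y * sinh y) y :=
    ((hasDerivAt_id' y).mul (hasDerivAt_cosh y)).sub (hasDerivAt_sinh y) |>.congr_deriv (by ring)
  have := pos_of_hasDerivAt_pos hd (by simp) (fun y hy => mul_pos hy (sinh_pos_iff.2 hy)) ha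
  linarith

lemma tanh_lt_self {a : ℝ} (ha : 0 < a) : tanh a < a := by
  rw [tanh_eq_sinh_div_cosh, div_lt_iff₀ (cosh_pos a)]
  exact sinh_lt_mul_cosh ha

lemma one_sub_sq_lt_one_div_cosh_sq {a : ℝ} (ha : 0 < a) : 1 - a ^ 2 < 1 / cosh a ^ 2 := by
  have htanh : tanh a ^ 2 < a ^ 2 :=
    pow_lt_pow_left₀ (tanh_lt_self ha) (tanh_eq_sinh_div_cosh a ▸ by positivity) two_ne_zero
  have : 1 / cosh a ^ 2 = 1 - tanh a ^ 2 := by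
    rw [tanh_eq_sinh_div_cosh]
    field_simp
    linarith [cosh_sq a]
  linarith

lemma sinh_mul_cosh_sub_lt {a : ℝ} (ha : 0 < a) : sinh a * cosh a - a < 2 * a / 3 * sinh a ^ 2 := by
  have hd y : HasDerivAt (fun y => 2 * y / 3 * sinh y ^ 2 - (sinh y * cosh y - y))
      (4 / 3 * sinh y * (y * cosh y - sinh y)) y :=
    (((hasDerivAt_id' y).const_mul 2).div_const 3 |>.mul ((hasDerivAt_sinh y).fun_pow 2)).sub
      (((hasDerivAt_sinh y).mul (hasDerivAt_cosh y)).sub (hasDerivAt_id' y)) |>.congr_deriv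
      (by linear_combination (-1) * cosh_sq y)
  have := pos_of_hasDerivAt_pos hd (by simp)
    (fun y hy => mul_pos (mul_pos (by norm_num) (sinh_pos_iff.2 hy))
      (sub_pos.2 (sinh_lt_mul_cosh hy))) ha
  linarith

lemma pow_three_lt_sinh_mul_cosh_sub {a : ℝ} (ha : 0 < a) : 2 * a ^ 3 / 3 < sinh a * cosh a - a := by
  have hd y : HasDerivAt (fun y => sinh y * cosh y - y - 2 * y ^ 3 / 3)
      (2 * (sinh y ^ 2 - y ^ 2)) y :=
    (((hasDerivAt_sinh y).mul (hasDerivAt_cosh y)).sub (hasDerivAt_id' y)).sub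
      (((hasDerivAt_id' y).fun_pow 3).const_mul 2 |>.div_const 3) |>.congr_deriv
      (by linear_combination cosh_sq y)
  have := pos_of_hasDerivAt_pos hd (by simp)
    (fun y hy => by nlinarith [self_lt_sinh_iff.2 hy]) ha
  linarith

lemma strictMonoOn_sinh_mul_cosh_sub_div_cosh_sq {c : ℝ} (hc : 0 ≤ c) :
    StrictMonoOn (fun w => (sinh w * cosh w - (w - c)) / cosh w ^ 2) (Ici c) := by
  refine strictMonoOn_Ici_of_hasDerivAt_pos (f' := fun w => 2 * (w - c) * sinh w / cosh w ^ 3)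
    (fun w => ?_) (fun w hw => ?_)
  · have hcosh := (cosh_pos w).ne'
    refine ((((hasDerivAt_sinh w).mul (hasDerivAt_cosh w)).sub ((hasDerivAt_id' w).sub_const c)).div
      ((hasDerivAt_cosh w).fun_pow 2) (pow_ne_zero 2 hcosh)).congr_deriv ?_
    simp only [Pi.sub_apply, Pi.mul_apply]
    field_simp
    linear_combination cosh w ^ 2 * cosh_sq w
  · have := sinh_pos_iff.2 (hc.trans_lt hw)
    have := cosh_pos w
    have : 0 < w - c := sub_pos.2 hw
    positivity

lemma sinh_mul_cosh_sub_div_sinh_sq_lt {u v w : ℝ} (hu : 0 < u) (huv : u ≤ v)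
    (hw : w ≤ v - 2 * u / 3) :
    (sinh u * cosh u - u) / sinh u ^ 2 < (sinh v * cosh v - w) / cosh v ^ 2 := by
  have hsinh := sinh_pos_iff.2 hu
  have hc : 0 ≤ 2 * u / 3 := by positivity
  calc (sinh u * cosh u - u) / sinh u ^ 2
      < (sinh u * cosh u - (u - 2 * u / 3)) / cosh u ^ 2 := by
        rw [div_lt_div_iff₀ (by positivity) (by positivity)]
        rw [cosh_sq u]
        linarith [sinh_mul_cosh_sub_lt hu]
    _ ≤ (sinh v * cosh v - (v - 2 * u / 3)) / cosh v ^ 2 :=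
        (strictMonoOn_sinh_mul_cosh_sub_div_cosh_sq hc).monotoneOn
          (mem_Ici.2 (by linarith)) (mem_Ici.2 (by linarith)) huv
    _ ≤ (sinh v * cosh v - w) / cosh v ^ 2 := by gcongr

end Real

lemma hasDerivAt_Rq (q : ℝ) {x t : ℝ} (hu : (t - 1) * x ≠ 0) :
    HasDerivAt (fun t' => Rq q x t')
      ((sinh ((t - 1) * x) * cosh ((t - 1) * x) - (t - 1) * x) / sinh ((t - 1) * x) ^ 2
        - tanh (t * x) + (q - t) * x / cosh (t * x) ^ 2) t := by
  have hsinh : sinh ((t - 1) * x) ≠ 0 := sinh_ne_zero.2 hu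
  have hcosh : cosh (t * x) ≠ 0 := (cosh_pos _).ne'
  have hdu : HasDerivAt (fun t' => (t' - 1) * x) x t := by
    simpa using ((hasDerivAt_id' t).sub_const 1).mul_const x
  have hdv : HasDerivAt (fun t' => t' * x) x t := by simpa using (hasDerivAt_id' t).mul_const x
  have hcoth := ((hasDerivAt_id' t).sub_const 1).mul (hdu.cosh.div hdu.sinh hsinh)
  have htanh := ((hasDerivAt_id' t).const_sub q).mul (hdv.sinh.div hdv.cosh hcosh)
  unfold Rq
  simp only [tanh_eq_sinh_div_cosh]
  refine ((hcoth.sub_const ((q + 1) * (sinh x / cosh x))).add htanh).congr_deriv ?_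
  simp only [Pi.div_apply]
  field_simp
  linear_combination x * (1 - t) * cosh (t * x) ^ 2 * cosh_sq ((t - 1) * x)
    + x * (q - t) * sinh ((t - 1) * x) ^ 2 * cosh_sq (t * x)

lemma deriv_Rq_neg {q x t : ℝ} (hx : 0 < x) (ht : 1 < t) (hq : 3 * q ≤ 4 * t + 2) :
    deriv (fun t' => Rq q x t') t < 0 := by
  have hu : 0 < (t - 1) * x := mul_pos (by linarith) hx
  rw [(hasDerivAt_Rq q hu.ne').deriv]
  have key := sinh_mul_cosh_sub_div_sinh_sq_lt hu (v := t * x) (w := (q - t) * x)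
    (by linarith) (by nlinarith)
  have htanh : tanh (t * x) - (q - t) * x / cosh (t * x) ^ 2
      = (sinh (t * x) * cosh (t * x) - (q - t) * x) / cosh (t * x) ^ 2 := by
    rw [tanh_eq_sinh_div_cosh]
    field_simp
  linarith

lemma mul_one_sub_sq_le_sinh_mul_cosh_sub_div {u : ℝ} (hu : 0 < u) :
    2 * u / 3 * (1 - u ^ 2) ≤ (sinh u * cosh u - u) / sinh u ^ 2 := by
  have hsinh := sinh_pos_iff.2 hu
  have hsq : sinh u ^ 2 * (1 - u ^ 2) ≤ u ^ 2 := by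
    have := pow_lt_pow_left₀ (sinh_lt_mul_cosh hu) hsinh.le two_ne_zero
    nlinarith [cosh_sq u]
  rw [le_div_iff₀ (by positivity)]
  nlinarith [pow_three_lt_sinh_mul_cosh_sub hu]

lemma exists_pos_deriv_Rq_pos {q t : ℝ} (ht : 1 < t) (hq : 4 * t + 2 < 3 * q) :
    ∃ x, 0 < x ∧ 0 < deriv (fun t' => Rq q x t') t := by
  have hsmall : ∀ᶠ x in 𝓝 (0 : ℝ),
      (2 * (t - 1) ^ 3 / 3 + (q - t) * t ^ 2) * x ^ 2 < q - (4 * t + 2) / 3 :=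
    ((continuous_const.mul (continuous_pow 2)).tendsto' 0 0 (by simp)).eventually
      (gt_mem_nhds (by linarith))
  obtain ⟨x, hx, hCx⟩ := ((eventually_mem_nhdsWithin (a := 0) (s := Ioi 0)).and
    (eventually_nhdsWithin_of_eventually_nhds hsmall)).exists
  refine ⟨x, hx, ?_⟩
  have hu : 0 < (t - 1) * x := mul_pos (by linarith) hx
  have hv : 0 < t * x := mul_pos (by linarith) hx
  have hw : 0 < (q - t) * x := mul_pos (by linarith) hx
  rw [(hasDerivAt_Rq q hu.ne').deriv]
  have hcoth := mul_one_sub_sq_le_sinh_mul_cosh_sub_div hu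
  have htanh := tanh_lt_self hv
  have hsech : (q - t) * x * (1 - (t * x) ^ 2) < (q - t) * x / cosh (t * x) ^ 2 := by
    rw [← mul_one_div]
    exact mul_lt_mul_of_pos_left (one_sub_sq_lt_one_div_cosh_sq hv) hw
  have hpos := mul_pos hx (sub_pos.2 hCx)
  linarith

lemma forall_deriv_Rq_neg_iff {q t : ℝ} (ht : 1 < t) :
    (∀ x, 0 < x → deriv (fun t' => Rq q x t') t < 0) ↔ 3 * q ≤ 4 * t + 2 := by
  refine ⟨fun h => ?_, fun hq x hx => deriv_Rq_neg hx ht hq⟩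
  by_contra! hq
  obtain ⟨x, hx, hpos⟩ := exists_pos_deriv_Rq_pos ht hq
  exact (h x hx).not_gt hpos

theorem Aq_eq_general (q : ℝ) :
    (2 < q →
      {t : ℝ | 1 < t ∧ ∀ x : ℝ, 0 < x → deriv (fun t' => Rq q x t') t < 0} =
        Set.Ici (1 + 3 / 4 * (q - 2))) ∧
    (q ≤ 2 →
      {t : ℝ | 1 < t ∧ ∀ x : ℝ, 0 < x → deriv (fun t' => Rq q x t') t < 0} =
        Set.Ioi 1) := by
  have hset : {t : ℝ | 1 < t ∧ ∀ x : ℝ, 0 < x → deriv (fun t' => Rq q x t') t < 0}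
      = {t | 1 < t ∧ 3 * q ≤ 4 * t + 2} := by
    ext t
    exact and_congr_right forall_deriv_Rq_neg_iff
  refine ⟨fun hq => ?_, fun hq => ?_⟩ <;> rw [hset] <;> ext t
  · simp only [mem_ofPred_eq, mem_Ici]
    exact ⟨fun h => by linarith [h.2], fun h => ⟨by linarith, by linarith⟩⟩
  · simp only [mem_ofPred_eq, mem_Ioi]
    exact ⟨And.left, fun ht => ⟨ht, by linarith⟩⟩

/-- The set `𝒜_q = {t > 1 : ∀ x > 0, ∂R_q/∂t(x,t) < 0}` equals
`[1 + (3/4)(q−2), +∞)` if `q > 2`, and `(1, +∞)` if `0 < q ≤ 2`. -/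
theorem Aq_eq (q : ℝ) (hq : 0 < q) :
    (2 < q →
      {t : ℝ | 1 < t ∧ ∀ x : ℝ, 0 < x → deriv (fun t' => Rq q x t') t < 0} =
        Set.Ici (1 + 3 / 4 * (q - 2))) ∧
    (q ≤ 2 →
      {t : ℝ | 1 < t ∧ ∀ x : ℝ, 0 < x → deriv (fun t' => Rq q x t') t < 0} =
        Set.Ioi 1) :=
  Aq_eq_general q
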